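/- arXiv:2412.07044 — 2 statements merged into one kernel-verified Lean document; each statement's English description precedes it below -/
import Mathlib

section
/- For every exceptional simple Lie algebra g (of type E_6, E_7, E_8, F_4, or G_2) and every integer t with 1 ≤ t ≤ rk(g), the inequality t ≤ (dim g - t - D^{ss}(rk g - t)) / (rk g + 1) holds, where D^{ss}(l) is the maximal dimension of a semisimple Lie algebra of rank l (with D^{ss}(0) = 0, and D^{ss}(l) = 3, 14, 21, 52, 55, 78, 133 for l = 1,...,7), and (rk, dim) is (6,78), (7,133), (8,248), (4,52), (2,14) respectively. -/
/-!
Clearing the denominator `rk + 1`, the bound says `t * (rk + 2) + Dss (rk - t) ≤ dim g`,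
an inequality between natural numbers; for each exceptional type it is checked for the
finitely many `t` by evaluation.
-/

/-- `Dss l`: the maximal dimension of a semisimple Lie algebra of rank `l ≤ 7`,
with `Dss 0 = 0` by convention. -/
def Dss : ℕ → ℕ
  | 0 => 0
  | 1 => 3
  | 2 => 14
  | 3 => 21
  | 4 => 52
  | 5 => 55
  | 6 => 78
  | 7 => 133
  | _ => 0

theorem cast_le_sub_sub_div_succ_iff (t r d e : ℕ) :
    (t : ℚ) ≤ ((d : ℚ) - t - e) / (r + 1) ↔ t * (r + 2) + e ≤ d := by
  rw [le_div_iff₀ (by positivity), ← Nat.cast_le (α := ℚ)]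
  push_cast
  constructor <;> intro h <;> linarith

def PicardBoundHolds (r d : ℕ) : Prop :=
  ∀ t ∈ Finset.Icc 1 r, t * (r + 2) + Dss (r - t) ≤ d

instance (r d : ℕ) : Decidable (PicardBoundHolds r d) := by
  unfold PicardBoundHolds; infer_instance

theorem picardBoundHolds_E6 : PicardBoundHolds 6 78 := by decide
theorem picardBoundHolds_E7 : PicardBoundHolds 7 133 := by decide
theorem picardBoundHolds_E8 : PicardBoundHolds 8 248 := by decide
theorem picardBoundHolds_F4 : PicardBoundHolds 4 52 := by decide
theorem picardBoundHolds_G2 : PicardBoundHolds 2 14 := by decide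

/-- For every exceptional simple Lie algebra `g` with `(rk, dim)` among
`(6,78), (7,133), (8,248), (4,52), (2,14)` and every `1 ≤ t ≤ rk`,
we have `t ≤ (dim g - t - Dss(rk g - t))/(rk g + 1)`. -/
theorem exceptional_estimate (rk d : ℕ)
    (h : (rk, d) = (6, 78) ∨ (rk, d) = (7, 133) ∨ (rk, d) = (8, 248) ∨
         (rk, d) = (4, 52) ∨ (rk, d) = (2, 14)) :
    ∀ t : ℕ, 1 ≤ t → t ≤ rk →
      (t : ℚ) ≤ ((d : ℚ) - t - Dss (rk - t)) / (rk + 1) := by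
  have hbound : PicardBoundHolds rk d := by
    simp only [Prod.mk.injEq] at h
    obtain ⟨rfl, rfl⟩ | ⟨rfl, rfl⟩ | ⟨rfl, rfl⟩ | ⟨rfl, rfl⟩ | ⟨rfl, rfl⟩ := h
    exacts [picardBoundHolds_E6, picardBoundHolds_E7, picardBoundHolds_E8,
      picardBoundHolds_F4, picardBoundHolds_G2]
  intro t ht₁ ht₂
  exact (cast_le_sub_sub_div_succ_iff t rk d _).2
    (hbound t (Finset.mem_Icc.2 ⟨ht₁, ht₂⟩))
end

section
/- Let a_1, ..., a_k and N_0 be nonnegative integers with N_i := a_i ≥ 1 and N_1 + ... + N_k + N_0 = l, and k < l. Then Σ_{i=1}^k N_i^2 + 2N_0^2 + N_0 ≤ 2(l-k)^2 + l, with the maximum attained at N_1 = ... = N_k = 1, N_0 = l - k. -/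
/-! Writing `Nᵢ = xᵢ + 1`, the parts `xᵢ ≥ 0` sum to `y = l - k - N₀`, and
`Σ Nᵢ² = Σ xᵢ² + 2y + k ≤ y² + 2y + k`. Moving the whole excess `y` into `N₀` then only increases
the value, since `2(y + N₀)² + (y + N₀) - (y² + 2y + 2N₀² + N₀) = y (y - 1 + 4N₀) ≥ 0` for integral `y`. -/

open Finset

lemma Finset.sum_add_one_sq_le {ι R : Type*} [CommSemiring R] [PartialOrder R] [IsOrderedRing R]
    (s : Finset ι) {f : ι → R} (hf : ∀ i ∈ s, 0 ≤ f i) :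
    ∑ i ∈ s, (f i + 1) ^ 2 ≤ (∑ i ∈ s, f i) ^ 2 + 2 * ∑ i ∈ s, f i + #s := by
  have hexpand : ∑ i ∈ s, (f i + 1) ^ 2 = ∑ i ∈ s, f i ^ 2 + 2 * ∑ i ∈ s, f i + #s := by
    simp only [add_sq, mul_one, one_pow, sum_add_distrib, mul_sum, sum_const, nsmul_one]
  rw [hexpand]
  gcongr
  exact sum_sq_le_sq_sum_of_nonneg hf

lemma Nat.sq_add_two_mul_add_two_mul_sq_add_le (y z : ℕ) :
    y ^ 2 + 2 * y + (2 * z ^ 2 + z) ≤ 2 * (y + z) ^ 2 + (y + z) := by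
  rcases Nat.eq_zero_or_pos y with rfl | hy
  · nlinarith
  · nlinarith

theorem typeBC_optimization_general (k l : ℕ) (N : Fin k → ℕ) (N0 : ℕ)
    (hpos : ∀ i, 1 ≤ N i) (hsum : (∑ i, N i) + N0 = l) :
    (∑ i, (N i) ^ 2) + 2 * N0 ^ 2 + N0 ≤ 2 * (l - k) ^ 2 + l ∧
    ((∀ i, N i = 1) → N0 = l - k →
      (∑ i, (N i) ^ 2) + 2 * N0 ^ 2 + N0 = 2 * (l - k) ^ 2 + l) := by
  obtain ⟨x, rfl⟩ : ∃ x : Fin k → ℕ, N = fun i => x i + 1 :=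
    ⟨fun i => N i - 1, funext fun i => (Nat.sub_add_cancel (hpos i)).symm⟩
  simp only [sum_add_distrib, sum_const, card_univ, Fintype.card_fin, smul_eq_mul, mul_one]
    at hsum
  have hl : l - k = ∑ i, x i + N0 := by omega
  refine ⟨?_, fun hx hN0 => ?_⟩
  · calc ∑ i, (x i + 1) ^ 2 + 2 * N0 ^ 2 + N0
        ≤ (∑ i, x i) ^ 2 + 2 * ∑ i, x i + k + 2 * N0 ^ 2 + N0 := by
          gcongr
          simpa using sum_add_one_sq_le univ (f := x) (fun i _ => Nat.zero_le _)
      _ ≤ 2 * (∑ i, x i + N0) ^ 2 + (∑ i, x i + N0) + k := by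
          linarith [Nat.sq_add_two_mul_add_two_mul_sq_add_le (∑ i, x i) N0]
      _ = 2 * (l - k) ^ 2 + l := by rw [hl]; omega
  · simp only [hx, sum_const, card_univ, Fintype.card_fin, smul_eq_mul]
    rw [hN0]
    omega

/-- The optimization bounding `dim h` in the `C_l` and `B_l` cases: if `N₁, ..., N_k ≥ 1`
and `N₀ ≥ 0` satisfy `N₁ + ... + N_k + N₀ = l` with `k < l`, then
`Σ Nᵢ² + 2N₀² + N₀ ≤ 2(l-k)² + l`, with the maximum attained at
`N₁ = ... = N_k = 1`, `N₀ = l - k`. -/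
theorem typeBC_optimization (k l : ℕ) (hkl : k < l) (N : Fin k → ℕ) (N0 : ℕ)
    (hpos : ∀ i, 1 ≤ N i) (hsum : (∑ i, N i) + N0 = l) :
    (∑ i, (N i) ^ 2) + 2 * N0 ^ 2 + N0 ≤ 2 * (l - k) ^ 2 + l ∧
    ((∀ i, N i = 1) → N0 = l - k →
      (∑ i, (N i) ^ 2) + 2 * N0 ^ 2 + N0 = 2 * (l - k) ^ 2 + l) :=
  typeBC_optimization_general k l N N0 hpos hsum
end
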